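/- arXiv:1111.2657 — 3 statements merged into one kernel-verified Lean document; each statement's English description precedes it below -/
import Mathlib

section
/- Let μ ≥ 0 and λ be real numbers with μ + λ ≥ 0, let r > 1 be real, and let u : ℝ³ → ℝ³ be differentiable at a point x with u(x) ≠ 0. Write a = |u(x)|, D = div(u/|u|)(x), g = ∇|u|(x), and s = u(x)·g. Then μ a² |∇u(x)|² + (λ+μ) a² (div u(x))² + μ(r−2) a² |g|² + (r−2)(μ+λ) a² s D + (r−2)(μ+λ) s² ≥ (4μ/3 + λ − r²(μ+λ)/(4(r−1))) a⁴ D² + μ(r−1) a² |g|². -/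
open scoped RealInnerProductSpace

noncomputable section

/-- ℝ³ as a Euclidean space. -/
abbrev E3 : Type := EuclideanSpace ℝ (Fin 3)

/-- The (i,j) entry of the Jacobian matrix ∇u(x) of a map u : ℝ³ → ℝ³. -/
def jacEntry (u : E3 → E3) (x : E3) (i j : Fin 3) : ℝ :=
  fderiv ℝ u x (EuclideanSpace.single j 1) i

/-- The squared Frobenius (Hilbert–Schmidt) norm |∇u(x)|² of the Jacobian of u at x. -/
def frobSq (u : E3 → E3) (x : E3) : ℝ :=
  ∑ i, ∑ j, (jacEntry u x i j) ^ 2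

/-- The divergence div u(x) = tr(∇u(x)). -/
def divg (u : E3 → E3) (x : E3) : ℝ :=
  ∑ i, jacEntry u x i i

/-!
Write `M = ∇u(x)`, `a = |u(x)|`, `e = u(x)/a` and `P = I - e eᵀ`. Then `g = Mᵀe`, `s = a eᵀMe`
and `a D = tr M - eᵀMe = tr (P M)`. Since `P` is a symmetric projection of rank `2` and
`|P M|² = |M|² - |g|²`, Cauchy–Schwarz for the Frobenius pairing `tr (P M) = ⟨P, P M⟩` gives
`a² D² ≤ 2 (|∇u|² - |g|²)`. As `a div u = a² D + s`, the difference of the two sides equals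
`μ a² (|∇u|² - |g|² - a² D²/3) + (μ + λ) (2 (r - 1) s + r a² D)² / (4 (r - 1))`.
-/

namespace Matrix

variable {n : Type*} [Fintype n]

theorem sum_sq_sub_vecMulVec_vecMul {e : n → ℝ} (he : e ⬝ᵥ e = 1) (M : Matrix n n ℝ) :
    ∑ i, ∑ j, (M - vecMulVec e (e ᵥ* M)) i j ^ 2
      = ∑ i, ∑ j, M i j ^ 2 - (e ᵥ* M) ⬝ᵥ (e ᵥ* M) := by
  set g := e ᵥ* M
  have hg : ∀ j, ∑ i, e i * M i j = g j := fun j => rfl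
  rw [Finset.sum_comm, Finset.sum_comm (f := fun i j => M i j ^ 2), dotProduct,
    ← Finset.sum_sub_distrib]
  refine Finset.sum_congr rfl fun j _ => ?_
  have he' : ∑ i, e i ^ 2 = 1 := by simpa only [dotProduct, sq] using he
  calc ∑ i, (M - vecMulVec e g) i j ^ 2
      = ∑ i, M i j ^ 2 - 2 * g j * ∑ i, e i * M i j + g j ^ 2 * ∑ i, e i ^ 2 := by
        rw [Finset.mul_sum, Finset.mul_sum, ← Finset.sum_sub_distrib, ← Finset.sum_add_distrib]
        refine Finset.sum_congr rfl fun i _ => ?_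
        rw [sub_apply, vecMulVec_apply]
        ring
    _ = ∑ i, M i j ^ 2 - g j * g j := by
        rw [hg, he']
        ring

variable [DecidableEq n]

theorem sum_sq_one_sub_vecMulVec_self {e : n → ℝ} (he : e ⬝ᵥ e = 1) :
    ∑ i, ∑ j, (1 - vecMulVec e e : Matrix n n ℝ) i j ^ 2 = Fintype.card n - 1 := by
  set P : Matrix n n ℝ := 1 - vecMulVec e e
  have hPt : Pᵀ = P := by simp [P, transpose_vecMulVec]
  have hPP : P * P = P := by
    simp only [P, sub_mul, mul_sub, one_mul, mul_one, vecMulVec_mul_vecMulVec, he, one_smul]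
    abel
  calc ∑ i, ∑ j, P i j ^ 2 = (P * Pᵀ).trace := by
        simp only [trace, diag_apply, mul_apply, transpose_apply, sq]
    _ = Fintype.card n - 1 := by
        rw [hPt, hPP, trace_sub, trace_one, trace_vecMulVec, he]

theorem trace_sq_le_of_vecMul_eq_zero (N : Matrix n n ℝ) {e : n → ℝ} (he : e ⬝ᵥ e = 1)
    (hN : e ᵥ* N = 0) :
    N.trace ^ 2 ≤ (Fintype.card n - 1) * ∑ i, ∑ j, N i j ^ 2 := by
  set P : Matrix n n ℝ := 1 - vecMulVec e e
  have hPN : P * N = N := by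
    rw [sub_mul, vecMulVec_mul, hN, one_mul, vecMulVec_zero, sub_zero]
  calc N.trace ^ 2 = (∑ p : n × n, P p.1 p.2 * N p.2 p.1) ^ 2 := by
        conv_lhs => rw [← hPN]
        simp only [trace, diag_apply, mul_apply, Fintype.sum_prod_type]
    _ ≤ (∑ p : n × n, P p.1 p.2 ^ 2) * ∑ p : n × n, N p.2 p.1 ^ 2 :=
        Finset.sum_mul_sq_le_sq_mul_sq _ _ _
    _ = (Fintype.card n - 1) * ∑ i, ∑ j, N i j ^ 2 := by
        rw [Fintype.sum_prod_type, Fintype.sum_prod_type, sum_sq_one_sub_vecMulVec_self he,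
          Finset.sum_comm]

theorem trace_sub_sq_le {e : n → ℝ} (he : e ⬝ᵥ e = 1) (M : Matrix n n ℝ) :
    (M.trace - e ⬝ᵥ (e ᵥ* M)) ^ 2
      ≤ (Fintype.card n - 1) * (∑ i, ∑ j, M i j ^ 2 - (e ᵥ* M) ⬝ᵥ (e ᵥ* M)) := by
  have hN : e ᵥ* (M - vecMulVec e (e ᵥ* M)) = 0 := by
    rw [vecMul_sub, vecMul_vecMulVec, he, one_smul, sub_self]
  have htrace : (M - vecMulVec e (e ᵥ* M)).trace = M.trace - e ⬝ᵥ (e ᵥ* M) := by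
    rw [trace_sub, trace_vecMulVec]
  simpa only [htrace, sum_sq_sub_vecMulVec_vecMul he] using
    (M - vecMulVec e (e ᵥ* M)).trace_sq_le_of_vecMul_eq_zero he hN

end Matrix

section Normalize

variable {E F : Type*} [NormedAddCommGroup E] [NormedSpace ℝ E]
  [NormedAddCommGroup F] [InnerProductSpace ℝ F] {u : E → F} {φ : E →L[ℝ] F} {x : E}

theorem HasFDerivAt.norm (hu : HasFDerivAt u φ x) (hx : u x ≠ 0) :
    HasFDerivAt (fun y => ‖u y‖) (innerSL ℝ (‖u x‖⁻¹ • u x) ∘L φ) x := by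
  have hsqrt := hu.norm_sq.sqrt (by positivity)
  simp only [Real.sqrt_sq (norm_nonneg _)] at hsqrt
  refine hsqrt.congr_fderiv ?_
  ext v
  simp only [_root_.smul_apply, ContinuousLinearMap.comp_apply, innerSL_apply_apply,
    inner_smul_left, RCLike.conj_to_real, nsmul_eq_mul, Nat.cast_ofNat, smul_eq_mul, one_div]
  field_simp

theorem HasFDerivAt.inv_norm_smul (hu : HasFDerivAt u φ x) (hx : u x ≠ 0) :
    HasFDerivAt (fun y => ‖u y‖⁻¹ • u y)
      (‖u x‖⁻¹ • (φ - (innerSL ℝ (‖u x‖⁻¹ • u x) ∘L φ).smulRight (‖u x‖⁻¹ • u x))) x := by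
  have hinv := (hasDerivAt_inv (norm_ne_zero_iff.mpr hx)).comp_hasFDerivAt x (hu.norm hx)
  refine (hinv.smul hu).congr_fderiv ?_
  ext v
  simp only [_root_.add_apply, ContinuousLinearMap.smulRight_apply,
    _root_.smul_apply, _root_.sub_apply, ContinuousLinearMap.comp_apply, innerSL_apply_apply,
    smul_eq_mul, inner_smul_left, RCLike.conj_to_real]
  rw [smul_sub, smul_smul, smul_smul, sub_eq_add_neg, ← neg_smul]
  congr 2
  field_simp

end Normalize

theorem EuclideanSpace.dotProduct_ofLp_inv_norm_smul_self {ι : Type*} [Fintype ι]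
    {v : EuclideanSpace ℝ ι} (hv : v ≠ 0) :
    WithLp.ofLp (‖v‖⁻¹ • v) ⬝ᵥ WithLp.ofLp (‖v‖⁻¹ • v) = 1 := by
  have h := real_inner_self_eq_norm_sq (‖v‖⁻¹ • v)
  rwa [norm_smul, norm_inv, norm_norm, inv_mul_cancel₀ (norm_ne_zero_iff.mpr hv), one_pow,
    EuclideanSpace.inner_eq_star_dotProduct, star_trivial] at h

section Jacobian

open Matrix

def jacobianMatrix (u : E3 → E3) (x : E3) : Matrix (Fin 3) (Fin 3) ℝ := Matrix.of (jacEntry u x)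

variable {u : E3 → E3} {x : E3}

theorem frobSq_eq_sum_sq : frobSq u x = ∑ i, ∑ j, jacobianMatrix u x i j ^ 2 := rfl

theorem divg_eq_trace : divg u x = (jacobianMatrix u x).trace := rfl

theorem jacobianMatrix_apply (i j : Fin 3) :
    jacobianMatrix u x i j = fderiv ℝ u x (EuclideanSpace.single j 1) i := rfl

theorem inner_fderiv_single (w : E3) (j : Fin 3) :
    ⟪w, fderiv ℝ u x (EuclideanSpace.single j 1)⟫ = (WithLp.ofLp w ᵥ* jacobianMatrix u x) j := by
  simp [PiLp.inner_apply, vecMul, dotProduct, jacobianMatrix_apply, mul_comm]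

theorem gradient_norm_eq (hu : DifferentiableAt ℝ u x) (hx : u x ≠ 0) :
    gradient (fun y => ‖u y‖) x
      = WithLp.toLp 2 (WithLp.ofLp (‖u x‖⁻¹ • u x) ᵥ* jacobianMatrix u x) := by
  ext j
  calc gradient (fun y => ‖u y‖) x j
      = ⟪gradient (fun y => ‖u y‖) x, EuclideanSpace.single j 1⟫ := by
        rw [EuclideanSpace.inner_single_right]; simp
    _ = ⟪‖u x‖⁻¹ • u x, fderiv ℝ u x (EuclideanSpace.single j 1)⟫ := by
        rw [gradient, InnerProductSpace.toDual_symm_apply, (hu.hasFDerivAt.norm hx).fderiv]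
        rfl
    _ = _ := inner_fderiv_single _ _

theorem norm_gradient_norm_sq (hu : DifferentiableAt ℝ u x) (hx : u x ≠ 0) :
    ‖gradient (fun y => ‖u y‖) x‖ ^ 2
      = (WithLp.ofLp (‖u x‖⁻¹ • u x) ᵥ* jacobianMatrix u x)
          ⬝ᵥ (WithLp.ofLp (‖u x‖⁻¹ • u x) ᵥ* jacobianMatrix u x) := by
  rw [gradient_norm_eq hu hx, ← real_inner_self_eq_norm_sq, EuclideanSpace.inner_toLp_toLp,
    star_trivial]

theorem inner_gradient_norm (hu : DifferentiableAt ℝ u x) (hx : u x ≠ 0) :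
    ⟪u x, gradient (fun y => ‖u y‖) x⟫ = ‖u x‖ * (WithLp.ofLp (‖u x‖⁻¹ • u x)
      ⬝ᵥ (WithLp.ofLp (‖u x‖⁻¹ • u x) ᵥ* jacobianMatrix u x)) := by
  conv_lhs => rw [← smul_inv_smul₀ (norm_ne_zero_iff.mpr hx) (u x)]
  rw [gradient_norm_eq hu hx, inner_smul_left, EuclideanSpace.inner_eq_star_dotProduct,
    star_trivial, dotProduct_comm, RCLike.conj_to_real]

theorem divg_inv_norm_smul (hu : DifferentiableAt ℝ u x) (hx : u x ≠ 0) :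
    divg (fun y => ‖u y‖⁻¹ • u y) x = ‖u x‖⁻¹ * ((jacobianMatrix u x).trace
      - WithLp.ofLp (‖u x‖⁻¹ • u x) ⬝ᵥ (WithLp.ofLp (‖u x‖⁻¹ • u x) ᵥ* jacobianMatrix u x)) := by
  rw [trace, dotProduct, ← Finset.sum_sub_distrib, Finset.mul_sum]
  refine Finset.sum_congr rfl fun i _ => ?_
  simp only [jacEntry, jacobianMatrix_apply, (hu.hasFDerivAt.inv_norm_smul hx).fderiv,
    _root_.smul_apply, _root_.sub_apply, ContinuousLinearMap.smulRight_apply,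
    ContinuousLinearMap.comp_apply, innerSL_apply_apply, inner_fderiv_single, smul_eq_mul,
    PiLp.smul_apply, PiLp.sub_apply, diag_apply, WithLp.ofLp_smul, smul_vecMul, Pi.smul_apply]
  ring

end Jacobian

theorem quadratic_form_ge_of_frobenius_ge {μ lam r a F T G2 s D : ℝ} (hμ : 0 ≤ μ)
    (hμlam : 0 ≤ μ + lam) (hr : 1 < r) (hD : a * T = a ^ 2 * D + s)
    (hF : a ^ 2 * D ^ 2 ≤ 3 * (F - G2)) :
    (4 * μ / 3 + lam - r ^ 2 * (μ + lam) / (4 * (r - 1))) * a ^ 4 * D ^ 2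
        + μ * (r - 1) * a ^ 2 * G2
      ≤ μ * a ^ 2 * F + (lam + μ) * a ^ 2 * T ^ 2 + μ * (r - 2) * a ^ 2 * G2
        + (r - 2) * (μ + lam) * a ^ 2 * s * D + (r - 2) * (μ + lam) * s ^ 2 := by
  have hr1 : 0 < r - 1 := sub_pos.mpr hr
  have key : μ * a ^ 2 * F + (lam + μ) * a ^ 2 * T ^ 2 + μ * (r - 2) * a ^ 2 * G2
        + (r - 2) * (μ + lam) * a ^ 2 * s * D + (r - 2) * (μ + lam) * s ^ 2
      - ((4 * μ / 3 + lam - r ^ 2 * (μ + lam) / (4 * (r - 1))) * a ^ 4 * D ^ 2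
        + μ * (r - 1) * a ^ 2 * G2)
      = μ * a ^ 2 * (3 * (F - G2) - a ^ 2 * D ^ 2) / 3
        + (μ + lam) * (2 * (r - 1) * s + r * a ^ 2 * D) ^ 2 / (4 * (r - 1)) := by
    field_simp
    linear_combination (12 * (r - 1) * (μ + lam) * (a * T + a ^ 2 * D + s)) * hD
  have hμpart : 0 ≤ μ * a ^ 2 * (3 * (F - G2) - a ^ 2 * D ^ 2) / 3 := by
    have := sub_nonneg.mpr hF
    positivity
  have hsq : 0 ≤ (μ + lam) * (2 * (r - 1) * s + r * a ^ 2 * D) ^ 2 / (4 * (r - 1)) := by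
    positivity
  linarith

/-- Pointwise lower bound for the quadratic form G in the weighted energy estimate:
for μ ≥ 0, μ + λ ≥ 0, r > 1, and u differentiable at x with u(x) ≠ 0, writing
a = |u(x)|, D = div(u/|u|)(x), g = ∇|u|(x), s = u(x)·g, one has
μ a² |∇u(x)|² + (λ+μ) a² (div u(x))² + μ(r−2) a² |g|² + (r−2)(μ+λ) a² s D
+ (r−2)(μ+λ) s² ≥ (4μ/3 + λ − r²(μ+λ)/(4(r−1))) a⁴ D² + μ(r−1) a² |g|². -/
theorem quadratic_form_lower_bound (μ lam r : ℝ) (hμ : 0 ≤ μ) (hμlam : 0 ≤ μ + lam)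
    (hr : 1 < r) (u : E3 → E3) (x : E3)
    (hu : DifferentiableAt ℝ u x) (hx : u x ≠ 0) :
    μ * ‖u x‖ ^ 2 * frobSq u x
      + (lam + μ) * ‖u x‖ ^ 2 * (divg u x) ^ 2
      + μ * (r - 2) * ‖u x‖ ^ 2 * ‖gradient (fun y => ‖u y‖) x‖ ^ 2
      + (r - 2) * (μ + lam) * ‖u x‖ ^ 2
          * ⟪u x, gradient (fun y => ‖u y‖) x⟫
          * divg (fun y => ‖u y‖⁻¹ • u y) x
      + (r - 2) * (μ + lam) * ⟪u x, gradient (fun y => ‖u y‖) x⟫ ^ 2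
      ≥ (4 * μ / 3 + lam - r ^ 2 * (μ + lam) / (4 * (r - 1))) * ‖u x‖ ^ 4
          * (divg (fun y => ‖u y‖⁻¹ • u y) x) ^ 2
        + μ * (r - 1) * ‖u x‖ ^ 2 * ‖gradient (fun y => ‖u y‖) x‖ ^ 2 := by
  have htrace := (jacobianMatrix u x).trace_sub_sq_le
    (EuclideanSpace.dotProduct_ofLp_inv_norm_smul_self hx)
  rw [Fintype.card_fin, Nat.cast_ofNat] at htrace
  rw [ge_iff_le, divg_inv_norm_smul hu hx, frobSq_eq_sum_sq, divg_eq_trace,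
    norm_gradient_norm_sq hu hx, inner_gradient_norm hu hx]
  set e := WithLp.ofLp (‖u x‖⁻¹ • u x)
  have ha : ‖u x‖ ≠ 0 := norm_ne_zero_iff.mpr hx
  refine quadratic_form_ge_of_frobenius_ge hμ hμlam hr ?_ ?_
  · field_simp
    ring
  · field_simp
    nlinarith [htrace]

end
end

section
/- Let μ > 0 and λ be real numbers with 5μ/3 < λ < 29μ/3. Then there exist a real number r with 3 < r < 7/2 and real numbers ε₀, ε₁ with 0 < ε₀ < 1 and 0 < ε₁ < 1 such that r²(μ+λ)/(4(r−1)) − 4μ/3 − λ > 0 and μ² ε₁ (1−ε₀)(r−1) / (3(r²(μ+λ)/(4(r−1)) − 4μ/3 − λ)) + μ(r−1) − (r−2)²(μ+λ)/4 > 0. -/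
/-!
At the boundary point r = 3, ε₀ = 0, ε₁ = 1 the denominator of φ is (3λ − 5μ)/24 and
f = (29μ − 3λ)(μ + λ) / (4(3λ − 5μ)); both are positive exactly when 5μ/3 < λ < 29μ/3.
Both are continuous there, so they stay positive at (ε₀, ε₁, r) = (e, 1 − e, 3 + e) for small e > 0.
-/

open Filter Topology

noncomputable section

/- `3 * phiDenom μ lam r` is the denominator of φ(ε₁, r), and `auxF` is f with φ expanded. -/
def phiDenom (μ lam r : ℝ) : ℝ := r ^ 2 * (μ + lam) / (4 * (r - 1)) - 4 * μ / 3 - lam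

def auxF (μ lam ε₀ ε₁ r : ℝ) : ℝ :=
  μ ^ 2 * ε₁ * (1 - ε₀) * (r - 1) / (3 * phiDenom μ lam r) + μ * (r - 1)
    - (r - 2) ^ 2 * (μ + lam) / 4

end

theorem phiDenom_three (μ lam : ℝ) : phiDenom μ lam 3 = (3 * lam - 5 * μ) / 24 := by
  unfold phiDenom
  ring

theorem auxF_zero_one_three (μ lam : ℝ) (h : 3 * lam - 5 * μ ≠ 0) :
    auxF μ lam 0 1 3 = (29 * μ - 3 * lam) * (μ + lam) / (4 * (3 * lam - 5 * μ)) := by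
  rw [auxF, phiDenom_three, div_add' _ _ _ (by positivity),
    div_sub_div _ _ (by positivity) four_ne_zero, div_eq_div_iff (by positivity) (by positivity)]
  ring

theorem continuousAt_phiDenom (μ lam : ℝ) {r : ℝ} (hr : r ≠ 1) :
    ContinuousAt (phiDenom μ lam) r := by
  have : 4 * (r - 1) ≠ 0 := by have := sub_ne_zero.2 hr; positivity
  unfold phiDenom
  fun_prop (disch := assumption)

theorem continuousAt_auxF (μ lam : ℝ) {ε₀ ε₁ r : ℝ} (hr : r ≠ 1) (hD : phiDenom μ lam r ≠ 0) :
    ContinuousAt (fun p : ℝ × ℝ × ℝ => auxF μ lam p.1 p.2.1 p.2.2) (ε₀, ε₁, r) := by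
  have hD' : ContinuousAt (fun p : ℝ × ℝ × ℝ => phiDenom μ lam p.2.2) (ε₀, ε₁, r) :=
    (continuousAt_phiDenom μ lam hr).comp (g := phiDenom μ lam) (by fun_prop)
  have : 3 * phiDenom μ lam r ≠ 0 := by positivity
  unfold auxF
  fun_prop (disch := assumption)

/-- For viscosity coefficients μ > 0 and λ with 5μ/3 < λ < 29μ/3, there exist
r ∈ (3, 7/2) and ε₀, ε₁ ∈ (0,1) with r²(μ+λ)/(4(r−1)) − 4μ/3 − λ > 0 such that the
auxiliary function f(ε₀,ε₁,r) = μ²ε₁(1−ε₀)(r−1)/(3(r²(μ+λ)/(4(r−1)) − 4μ/3 − λ))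
+ μ(r−1) − (r−2)²(μ+λ)/4 is positive. -/
theorem exists_good_parameters (μ lam : ℝ) (hμ : 0 < μ)
    (h1 : 5 * μ / 3 < lam) (h2 : lam < 29 * μ / 3) :
    ∃ r ε₀ ε₁ : ℝ, 3 < r ∧ r < 7 / 2 ∧ 0 < ε₀ ∧ ε₀ < 1 ∧ 0 < ε₁ ∧ ε₁ < 1 ∧
      r ^ 2 * (μ + lam) / (4 * (r - 1)) - 4 * μ / 3 - lam > 0 ∧
      μ ^ 2 * ε₁ * (1 - ε₀) * (r - 1)
          / (3 * (r ^ 2 * (μ + lam) / (4 * (r - 1)) - 4 * μ / 3 - lam))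
        + μ * (r - 1) - (r - 2) ^ 2 * (μ + lam) / 4 > 0 := by
  have hD3 : 0 < phiDenom μ lam 3 := by rw [phiDenom_three]; linarith
  have hF3 : 0 < auxF μ lam 0 1 3 := by
    rw [auxF_zero_one_three μ lam (by linarith)]
    exact div_pos (mul_pos (by linarith) (by linarith)) (by linarith)
  have hpath : Tendsto (fun e : ℝ => (e, 1 - e, 3 + e)) (𝓝[>] 0) (𝓝 (0, 1, 3)) :=
    tendsto_nhdsWithin_of_tendsto_nhds <|
      (by fun_prop : Continuous fun e : ℝ => (e, 1 - e, 3 + e)).tendsto' 0 _ (by norm_num)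
  have hD : ∀ᶠ e in 𝓝[>] (0 : ℝ), 0 < phiDenom μ lam (3 + e) :=
    ((continuousAt_phiDenom μ lam (by norm_num)).tendsto.comp
      hpath.snd_nhds.snd_nhds).eventually_const_lt hD3
  have hF : ∀ᶠ e in 𝓝[>] (0 : ℝ), 0 < auxF μ lam e (1 - e) (3 + e) :=
    ((continuousAt_auxF μ lam (by norm_num) hD3.ne').tendsto.comp hpath).eventually_const_lt hF3
  have hpos : ∀ᶠ e in 𝓝[>] (0 : ℝ), 0 < e := eventually_mem_nhdsWithin
  have hsmall : ∀ᶠ e in 𝓝[>] (0 : ℝ), e < 1 / 2 :=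
    nhdsWithin_le_nhds (eventually_lt_nhds (by norm_num))
  obtain ⟨e, he, hsmall, hDe, hFe⟩ := (hpos.and (hsmall.and (hD.and hF))).exists
  exact ⟨3 + e, e, 1 - e, by linarith, by linarith, he, by linarith, by linarith, by linarith,
    hDe, hFe⟩
end

section
/- Let T > 0, p > 1, γ > 1, and let μ, λ be real numbers with 2μ + λ > 0. Let ρ : ℝ³ × [0,T] → ℝ and u : ℝ³ × [0,T] → ℝ³ be continuously differentiable with ρ ≥ 0, and suppose there is a compact set K ⊂ ℝ³ such that ρ(·,t) vanishes outside K for every t ∈ [0,T]. Assume the continuity equation ∂ₜρ + div(ρu) = 0 holds on ℝ³ × [0,T], and assume div u = (G + ρ^γ)/(2μ+λ) for a continuous function G : ℝ³ × [0,T] → ℝ that is bounded in x for each t. Then the function t ↦ ∫_{ℝ³} ρ(x,t)^p dx is differentiable, equals ∫ρ^p with d/dt ∫_{ℝ³} ρ^p dx = (1−p) ∫_{ℝ³} ρ^p div u dx, and satisfies d/dt ∫_{ℝ³} ρ^p dx ≤ ((p−1)/(2μ+λ)) · sup_{x∈ℝ³} |G(x,t)| · ∫_{ℝ³} ρ^p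 dx for every t ∈ [0,T]. -/
/-!
`ρ^p` is `C¹` on `[0,T] × ℝ³` and vanishes outside `K`, so its time derivative is bounded on
`[0,T] × K` and dominated convergence lets us differentiate `∫ ρ^p` under the integral sign.
By the continuity equation `∂ₜ(ρ^p) = -p ρ^(p-1) div(ρu) = -div(ρ^p u) + (1-p) ρ^p div u`, and the
divergence of the compactly supported field `ρ^p u` integrates to zero. Finally `ρ^γ ≥ 0` gives
`div u ≥ -sup |G| / (2μ+λ)`, and `1 - p < 0`.
-/

open MeasureTheory

noncomputable section

/-- The partial derivative ∂ᵢ g of a scalar function g : ℝ³ → ℝ. -/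
def pd (i : Fin 3) (g : E3 → ℝ) (x : E3) : ℝ :=
  fderiv ℝ g x (EuclideanSpace.single i 1)

open Set Topology

section Slices

variable {E F : Type*} [NormedAddCommGroup E] [NormedSpace ℝ E]
  [NormedAddCommGroup F] [NormedSpace ℝ F]

theorem ContDiffOn.contDiff_slice {X : Type*} [NormedAddCommGroup X] [NormedSpace ℝ X]
    {n : WithTop ℕ∞} {f : X → E → F} {S : Set X}
    (hf : ContDiffOn ℝ n (fun q : X × E => f q.1 q.2) (S ×ˢ univ)) {s : X} (hs : s ∈ S) :
    ContDiff ℝ n (f s) := by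
  rw [← contDiffOn_univ]
  exact hf.comp (contDiff_const.prodMk contDiff_id).contDiffOn fun _ _ => ⟨hs, trivial⟩

/-- The time derivative is the joint derivative in the direction `(1, 0)`, which is continuous,
hence bounded on the compact set `S × K`. -/
theorem exists_bound_hasDerivWithinAt_of_contDiffOn {S : Set ℝ} (hS : IsCompact S)
    (hSu : UniqueDiffOn ℝ S) {K : Set E} (hK : IsCompact K) {f : ℝ → E → F}
    (hf : ContDiffOn ℝ 1 (fun q : ℝ × E => f q.1 q.2) (S ×ˢ univ)) :
    ∃ C, ∀ s ∈ S, ∀ x ∈ K, ∀ f', HasDerivWithinAt (fun τ => f τ x) f' S s → ‖f'‖ ≤ C := by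
  set Φ := fderivWithin ℝ (fun q : ℝ × E => f q.1 q.2) (S ×ˢ univ)
  have hΦ : ContinuousOn (fun q => Φ q (1, 0)) (S ×ˢ univ) :=
    (hf.continuousOn_fderivWithin (hSu.prod uniqueDiffOn_univ) le_rfl).clm_apply
      continuousOn_const
  obtain ⟨C, hC⟩ := (hS.prod hK).exists_bound_of_continuousOn
    (hΦ.mono (prod_mono le_rfl (subset_univ K)))
  refine ⟨C, fun s hs x hx f' hf' => ?_⟩
  have htime : HasDerivWithinAt (fun τ => f τ x) (Φ (s, x) (1, 0)) S s :=
    (hf.differentiableOn one_ne_zero (s, x) ⟨hs, trivial⟩).hasFDerivWithinAt.comp_hasDerivWithinAt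
      (f := fun τ => (τ, x)) s ((hasDerivWithinAt_id s S).prodMk (hasDerivWithinAt_const s S x))
      fun _ hτ => ⟨hτ, trivial⟩
  rw [(hSu s hs).eq_deriv _ hf' htime]
  exact hC (s, x) ⟨hs, hx⟩

end Slices

/-- Dominated convergence for the difference quotients, which are bounded by `C` on `K`
(mean value theorem) and vanish off `K`. -/
theorem hasDerivWithinAt_integral_of_bound {α : Type*} [MeasurableSpace α] {μ : Measure α}
    {S : Set ℝ} (hS : Convex ℝ S) {K : Set α} (hK : MeasurableSet K) (hKμ : μ K ≠ ⊤)
    {f f' : ℝ → α → ℝ} {C : ℝ} (hf : ∀ s ∈ S, Integrable (f s) μ)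
    (hzero : ∀ s ∈ S, ∀ x ∉ K, f s x = 0)
    (hf' : ∀ s ∈ S, ∀ x, HasDerivWithinAt (fun τ => f τ x) (f' s x) S s)
    (hC : ∀ s ∈ S, ∀ x ∈ K, ‖f' s x‖ ≤ C) {t : ℝ} (ht : t ∈ S) :
    HasDerivWithinAt (fun s => ∫ x, f s x ∂μ) (∫ x, f' t x ∂μ) S t := by
  rw [hasDerivWithinAt_iff_tendsto_slope]
  have hmem : ∀ᶠ s in 𝓝[S \ {t}] t, s ∈ S \ {t} := eventually_mem_nhdsWithin
  have hslope : ∀ s ∈ S \ {t}, ∀ x, ‖slope (fun τ => f τ x) t s‖ ≤ K.indicator (fun _ => C) x := by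
    rintro s ⟨hs, hst⟩ x
    have hst : 0 < ‖s - t‖ := norm_sub_pos_iff.mpr hst
    by_cases hx : x ∈ K
    · rw [indicator_of_mem hx, slope_def_field, norm_div, div_le_iff₀ hst]
      exact hS.norm_image_sub_le_of_norm_hasDerivWithin_le
        (fun τ hτ => hf' τ hτ x) (fun τ hτ => hC τ hτ x hx) ht hs
    · simp [indicator_of_notMem hx, slope_def_field, hzero s hs x hx, hzero t ht x hx]
  have H := tendsto_integral_filter_of_dominated_convergence (μ := μ)
    (F := fun s x => slope (fun τ => f τ x) t s) (K.indicator fun _ => C)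
    (hmem.mono fun s hs => by
      simpa only [slope_def_field, Pi.sub_apply] using
        (((hf s hs.1).sub (hf t ht)).div_const (s - t)).aestronglyMeasurable)
    (hmem.mono fun s hs => ae_of_all _ (hslope s hs))
    ((integrable_indicator_iff hK).mpr (integrableOn_const hKμ))
    (ae_of_all _ fun x => hasDerivWithinAt_iff_tendsto_slope.mp (hf' t ht x))
  refine H.congr' ?_
  filter_upwards [hmem] with s hs
  simp only [slope_def_field]
  rw [integral_div, integral_sub (hf s hs.1) (hf t ht)]

theorem Continuous.integrable_rpow_of_hasCompactSupport {α : Type*} [TopologicalSpace α]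
    [MeasurableSpace α] [OpensMeasurableSpace α] {μ : Measure α} [IsFiniteMeasureOnCompacts μ]
    {f : α → ℝ} {p : ℝ} (hf : Continuous f) (hs : HasCompactSupport f) (hp : 0 < p) :
    Integrable (fun x => f x ^ p) μ :=
  (hf.rpow_const fun _ => Or.inr hp.le).integrable_of_hasCompactSupport (hs.rpow_const hp.ne')

theorem one_sub_mul_integral_mul_le {α : Type*} [MeasurableSpace α] {μ : Measure α}
    {w g : α → ℝ} {p m : ℝ} (hp : 1 ≤ p) (hw0 : ∀ x, 0 ≤ w x) (hw : Integrable w μ)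
    (hwg : Integrable (fun x => w x * g x) μ) (hg : ∀ x, -m ≤ g x) :
    (1 - p) * ∫ x, w x * g x ∂μ ≤ (p - 1) * m * ∫ x, w x ∂μ := by
  have h : -m * ∫ x, w x ∂μ ≤ ∫ x, w x * g x ∂μ := by
    rw [← integral_const_mul]
    exact integral_mono (hw.const_mul _) hwg fun x => by nlinarith [hw0 x, hg x]
  nlinarith

theorem neg_iSup_abs_div_le_add_div {α : Type*} {G : α → ℝ}
    (hG : BddAbove (range fun x => |G x|)) {a c : ℝ} (ha : 0 ≤ a) (hc : 0 < c) (x : α) :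
    -((⨆ y, |G y|) / c) ≤ (G x + a) / c := by
  rw [← neg_div]
  exact div_le_div_of_nonneg_right
    (by linarith [neg_le_of_abs_le (le_ciSup hG x)]) hc.le

section Divergence

variable {g : E3 → ℝ} {v : E3 → E3} {ρ : E3 → ℝ} {x : E3} {p : ℝ}

theorem ContDiff.continuous_pd (hg : ContDiff ℝ 1 g) (i : Fin 3) : Continuous (pd i g) :=
  (hg.continuous_fderiv one_ne_zero).clm_apply continuous_const

theorem integrable_pd (hg : ContDiff ℝ 1 g) (hs : HasCompactSupport g) (i : Fin 3) :
    Integrable (pd i g) :=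
  (hg.continuous_pd i).integrable_of_hasCompactSupport (hs.fderiv_apply ℝ _)

theorem integral_pd_eq_zero (hg : ContDiff ℝ 1 g) (hs : HasCompactSupport g) (i : Fin 3) :
    ∫ x, pd i g x = 0 := by
  have hpd : Integrable fun x => fderiv ℝ g x (EuclideanSpace.single i 1) :=
    integrable_pd hg hs i
  have h := integral_mul_fderiv_eq_neg_fderiv_mul_of_integrable (f := fun _ : E3 => (1 : ℝ))
    (g := g) (v := EuclideanSpace.single i 1) (μ := volume) (by simp)
    (by simpa using hpd)
    (by simpa using hg.continuous.integrable_of_hasCompactSupport hs)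
    (fun _ _ => differentiableAt_const 1) (fun x _ => hg.differentiable one_ne_zero x)
  simpa [pd] using h

theorem pd_mul {f : E3 → ℝ} (hf : DifferentiableAt ℝ f x) (hg : DifferentiableAt ℝ g x)
    (i : Fin 3) : pd i (fun y => f y * g y) x = pd i f x * g x + f x * pd i g x := by
  simp only [pd, fderiv_fun_mul hf hg, add_apply, smul_apply, smul_eq_mul]
  ring

theorem pd_rpow (hg : DifferentiableAt ℝ g x) (hp : 1 ≤ p) (i : Fin 3) :
    pd i (fun y => g y ^ p) x = p * g x ^ (p - 1) * pd i g x := by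
  have h : HasFDerivAt (fun y => g y ^ p) ((p * g x ^ (p - 1)) • fderiv ℝ g x) x :=
    (Real.hasDerivAt_rpow_const (Or.inr hp)).comp_hasFDerivAt x hg.hasFDerivAt
  simp [pd, h.fderiv, mul_assoc]

def divergence (v : E3 → E3) (x : E3) : ℝ :=
  ∑ i, pd i (fun y => v y i) x

theorem ContDiff.component (hv : ContDiff ℝ 1 v) (i : Fin 3) :
    ContDiff ℝ 1 (fun y => v y i) := by
  exact (EuclideanSpace.proj i).contDiff.comp hv

theorem ContDiff.continuous_divergence (hv : ContDiff ℝ 1 v) : Continuous (divergence v) :=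
  continuous_finsetSum _ fun i _ => (hv.component i).continuous_pd i

theorem HasCompactSupport.component (hv : HasCompactSupport v) (i : Fin 3) :
    HasCompactSupport (fun y => v y i) :=
  hv.comp_left (g := fun w : E3 => w i) rfl

theorem integrable_rpow_mul_divergence (hρ : Continuous ρ) (hρs : HasCompactSupport ρ)
    (hv : ContDiff ℝ 1 v) (hp : 0 < p) : Integrable fun x => ρ x ^ p * divergence v x :=
  Continuous.integrable_of_hasCompactSupport
    ((hρ.rpow_const fun _ => Or.inr hp.le).mul hv.continuous_divergence)
    (hρs.rpow_const hp.ne').mul_right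

theorem integrable_divergence (hv : ContDiff ℝ 1 v) (hs : HasCompactSupport v) :
    Integrable (divergence v) :=
  integrable_finsetSum _ fun i _ => integrable_pd (hv.component i) (hs.component i) i

theorem integral_divergence_eq_zero (hv : ContDiff ℝ 1 v) (hs : HasCompactSupport v) :
    ∫ x, divergence v x = 0 := by
  unfold divergence
  rw [integral_finsetSum _ fun i _ => integrable_pd (hv.component i) (hs.component i) i]
  exact Finset.sum_eq_zero fun i _ => integral_pd_eq_zero (hv.component i) (hs.component i) i

theorem rpow_sub_one_mul_divergence_smul (hρ : DifferentiableAt ℝ ρ x)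
    (hv : DifferentiableAt ℝ v x) (hρ0 : 0 ≤ ρ x) (hp : 1 ≤ p) :
    p * ρ x ^ (p - 1) * divergence (fun y => ρ y • v y) x
      = divergence (fun y => ρ y ^ p • v y) x + (p - 1) * (ρ x ^ p * divergence v x) := by
  have hvi : ∀ i, DifferentiableAt ℝ (fun y => v y i) x := fun i => by
    exact (EuclideanSpace.proj i).differentiableAt.comp x hv
  have hρp : ρ x ^ (p - 1) * ρ x = ρ x ^ p := by
    rw [← Real.rpow_add_one' hρ0 (by linarith), sub_add_cancel]
  simp only [divergence, PiLp.smul_apply, smul_eq_mul, Finset.mul_sum, ← Finset.sum_add_distrib]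
  refine Finset.sum_congr rfl fun i _ => ?_
  rw [pd_mul hρ (hvi i), pd_mul (hρ.rpow_const (Or.inr hp)) (hvi i), pd_rpow hρ hp, ← hρp]
  ring

/-- The left-hand side is `∫ ∂ₜ(ρ^p)` when `ρ` obeys the continuity equation with velocity `v`. -/
theorem integral_neg_divergence_smul_mul_rpow (hρ : ContDiff ℝ 1 ρ) (hρs : HasCompactSupport ρ)
    (hρ0 : ∀ x, 0 ≤ ρ x) (hv : ContDiff ℝ 1 v) (hp : 1 ≤ p) :
    ∫ x, -divergence (fun y => ρ y • v y) x * p * ρ x ^ (p - 1)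
      = (1 - p) * ∫ x, ρ x ^ p * divergence v x := by
  have hρp : ContDiff ℝ 1 fun x => ρ x ^ p := hρ.rpow_const_of_le (m := 1) (by simpa using hp)
  have hρps : HasCompactSupport fun x => ρ x ^ p := hρs.rpow_const (by linarith)
  have hfluxC1 : ContDiff ℝ 1 fun y => ρ y ^ p • v y := hρp.smul hv
  have hfluxs : HasCompactSupport fun y => ρ y ^ p • v y := hρps.smul_right
  have hflux : Integrable (divergence fun y => ρ y ^ p • v y) :=
    integrable_divergence hfluxC1 hfluxs
  have hρpdiv : Integrable fun x => ρ x ^ p * divergence v x :=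
    integrable_rpow_mul_divergence hρ.continuous hρs hv (by linarith)
  calc ∫ x, -divergence (fun y => ρ y • v y) x * p * ρ x ^ (p - 1)
      = ∫ x, -divergence (fun y => ρ y ^ p • v y) x + (1 - p) * (ρ x ^ p * divergence v x) :=
        integral_congr_ae <| ae_of_all _ fun x => by
          linear_combination -rpow_sub_one_mul_divergence_smul
            (hρ.differentiable one_ne_zero x) (hv.differentiable one_ne_zero x) (hρ0 x) hp
    _ = (1 - p) * ∫ x, ρ x ^ p * divergence v x := by
      rw [integral_add hflux.fun_neg (hρpdiv.const_mul _), integral_neg,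
        integral_divergence_eq_zero hfluxC1 hfluxs, neg_zero, zero_add,
        integral_const_mul]

end Divergence

theorem deriv_int_rho_pow_general (T p γ μ lam : ℝ) (hT : 0 < T) (hp : 1 < p)
    (hvisc : 0 < 2 * μ + lam)
    (ρ : ℝ → E3 → ℝ) (u : ℝ → E3 → E3) (G : ℝ → E3 → ℝ)
    (hρC1 : ContDiffOn ℝ 1 (fun q : ℝ × E3 => ρ q.1 q.2) (Set.Icc 0 T ×ˢ Set.univ))
    (huC1 : ContDiffOn ℝ 1 (fun q : ℝ × E3 => u q.1 q.2) (Set.Icc 0 T ×ˢ Set.univ))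
    (hρnonneg : ∀ t ∈ Set.Icc (0:ℝ) T, ∀ x : E3, 0 ≤ ρ t x)
    (K : Set E3) (hK : IsCompact K)
    (hsupp : ∀ t ∈ Set.Icc (0:ℝ) T, ∀ x : E3, x ∉ K → ρ t x = 0)
    (hcontinuity : ∀ t ∈ Set.Icc (0:ℝ) T, ∀ x : E3,
      HasDerivWithinAt (fun s => ρ s x)
        (-(∑ i, pd i (fun y => ρ t y * u t y i) x)) (Set.Icc 0 T) t)
    (hdiv : ∀ t ∈ Set.Icc (0:ℝ) T, ∀ x : E3,
      (∑ i, pd i (fun y => u t y i) x) = (G t x + ρ t x ^ γ) / (2 * μ + lam))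
    (hGbdd : ∀ t ∈ Set.Icc (0:ℝ) T, ∃ M : ℝ, ∀ x : E3, |G t x| ≤ M) :
    ∀ t ∈ Set.Icc (0:ℝ) T,
      HasDerivWithinAt (fun s => ∫ x : E3, ρ s x ^ p)
        ((1 - p) * ∫ x : E3, ρ t x ^ p * ∑ i, pd i (fun y => u t y i) x)
        (Set.Icc 0 T) t
      ∧ (1 - p) * (∫ x : E3, ρ t x ^ p * ∑ i, pd i (fun y => u t y i) x)
          ≤ ((p - 1) / (2 * μ + lam)) * (⨆ x : E3, |G t x|) * ∫ x : E3, ρ t x ^ p := by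
  intro t ht
  have hρs : ∀ s ∈ Icc 0 T, ContDiff ℝ 1 (ρ s) := fun s hs => hρC1.contDiff_slice hs
  have hρsupp : ∀ s ∈ Icc 0 T, HasCompactSupport (ρ s) := fun s hs => .intro hK (hsupp s hs)
  have hρp : ∀ s ∈ Icc 0 T, Integrable fun x => ρ s x ^ p := fun s hs =>
    (hρs s hs).continuous.integrable_rpow_of_hasCompactSupport (hρsupp s hs) (by linarith)
  have hut : ContDiff ℝ 1 (u t) := huC1.contDiff_slice ht
  refine ⟨?_, ?_⟩
  · obtain ⟨C, hC⟩ := exists_bound_hasDerivWithinAt_of_contDiffOn isCompact_Icc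
      (uniqueDiffOn_Icc hT) hK (f := fun s x => ρ s x ^ p)
      (hρC1.rpow_const_of_le (m := 1) (by simpa using hp.le))
    have hdt : ∀ s ∈ Icc 0 T, ∀ x, HasDerivWithinAt (fun τ => ρ τ x ^ p)
        (-divergence (fun y => ρ s y • u s y) x * p * ρ s x ^ (p - 1)) (Icc 0 T) s :=
      fun s hs x => (hcontinuity s hs x).rpow_const (Or.inr hp.le)
    refine (hasDerivWithinAt_integral_of_bound (convex_Icc 0 T) hK.measurableSet
      hK.measure_lt_top.ne hρp
      (fun s hs x hx => by rw [hsupp s hs x hx, Real.zero_rpow (by linarith)])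
      hdt (fun s hs x hx => hC s hs x hx _ (hdt s hs x)) ht).congr_deriv ?_
    exact integral_neg_divergence_smul_mul_rpow (hρs t ht) (hρsupp t ht) (hρnonneg t ht) hut hp.le
  · obtain ⟨M, hM⟩ := hGbdd t ht
    have hdivu : ∀ x, -((⨆ x, |G t x|) / (2 * μ + lam)) ≤ divergence (u t) x := fun x => by
      rw [divergence, hdiv t ht x]
      exact neg_iSup_abs_div_le_add_div ⟨M, forall_mem_range.2 hM⟩
        (Real.rpow_nonneg (hρnonneg t ht x) γ) hvisc x
    calc _ ≤ (p - 1) * ((⨆ x, |G t x|) / (2 * μ + lam)) * ∫ x, ρ t x ^ p :=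
          one_sub_mul_integral_mul_le hp.le (fun x => Real.rpow_nonneg (hρnonneg t ht x) p)
            (hρp t ht) (integrable_rpow_mul_divergence (hρs t ht).continuous (hρsupp t ht) hut
              (by linarith)) hdivu
      _ = _ := by ring

/-- Evolution of ∫ρ^p under the continuity equation: let T > 0, p > 1, γ > 1 and
2μ + λ > 0.  Let ρ ≥ 0 and u be continuously differentiable on ℝ³ × [0,T], with ρ(·,t)
supported in a fixed compact set K, satisfying the continuity equation
∂ₜρ + div(ρu) = 0, and suppose div u = (G + ρ^γ)/(2μ+λ) for a continuous function G
bounded in x for each t.  Then t ↦ ∫ρ^p is differentiable with derivative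
(1−p)∫ρ^p div u, which is at most ((p−1)/(2μ+λ))·sup_x |G(x,t)|·∫ρ^p. -/
theorem deriv_int_rho_pow (T p γ μ lam : ℝ) (hT : 0 < T) (hp : 1 < p) (hγ : 1 < γ)
    (hvisc : 0 < 2 * μ + lam)
    (ρ : ℝ → E3 → ℝ) (u : ℝ → E3 → E3) (G : ℝ → E3 → ℝ)
    (hρC1 : ContDiffOn ℝ 1 (fun q : ℝ × E3 => ρ q.1 q.2) (Set.Icc 0 T ×ˢ Set.univ))
    (huC1 : ContDiffOn ℝ 1 (fun q : ℝ × E3 => u q.1 q.2) (Set.Icc 0 T ×ˢ Set.univ))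
    (hρnonneg : ∀ t ∈ Set.Icc (0:ℝ) T, ∀ x : E3, 0 ≤ ρ t x)
    (K : Set E3) (hK : IsCompact K)
    (hsupp : ∀ t ∈ Set.Icc (0:ℝ) T, ∀ x : E3, x ∉ K → ρ t x = 0)
    (hcontinuity : ∀ t ∈ Set.Icc (0:ℝ) T, ∀ x : E3,
      HasDerivWithinAt (fun s => ρ s x)
        (-(∑ i, pd i (fun y => ρ t y * u t y i) x)) (Set.Icc 0 T) t)
    (hdiv : ∀ t ∈ Set.Icc (0:ℝ) T, ∀ x : E3,
      (∑ i, pd i (fun y => u t y i) x) = (G t x + ρ t x ^ γ) / (2 * μ + lam))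
    (hGcont : ContinuousOn (fun q : ℝ × E3 => G q.1 q.2) (Set.Icc 0 T ×ˢ Set.univ))
    (hGbdd : ∀ t ∈ Set.Icc (0:ℝ) T, ∃ M : ℝ, ∀ x : E3, |G t x| ≤ M) :
    ∀ t ∈ Set.Icc (0:ℝ) T,
      HasDerivWithinAt (fun s => ∫ x : E3, ρ s x ^ p)
        ((1 - p) * ∫ x : E3, ρ t x ^ p * ∑ i, pd i (fun y => u t y i) x)
        (Set.Icc 0 T) t
      ∧ (1 - p) * (∫ x : E3, ρ t x ^ p * ∑ i, pd i (fun y => u t y i) x)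
          ≤ ((p - 1) / (2 * μ + lam)) * (⨆ x : E3, |G t x|) * ∫ x : E3, ρ t x ^ p :=
  deriv_int_rho_pow_general T p γ μ lam hT hp hvisc ρ u G hρC1 huC1 hρnonneg K hK hsupp hcontinuity
    hdiv hGbdd

end
end
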